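/- For every a ∈ F one has W_f(a) ∈ {0, 2^m, −2^m, 2^(m+1), 3·2^m}. -/
import Mathlib


open Finset Polynomial
set_option linter.unusedSectionVars false

/-- Absolute trace-style sum `Tr_n : F → F` for `n = 2m`. -/
def trN (m : ℕ) {F : Type*} [Field F] (x : F) : F :=
  ∑ i ∈ Finset.range (2 * m), x ^ (2 ^ i)

/-- Trace-style sum `Tr_m : F → F` (meant for elements of the subfield `K`). -/
def trM (m : ℕ) {F : Type*} [Field F] (x : F) : F :=
  ∑ i ∈ Finset.range m, x ^ (2 ^ i)

/-- `ε(0) = 1`, `ε(t) = -1` for `t ≠ 0`. -/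
def eps {F : Type*} [Field F] [DecidableEq F] (t : F) : ℤ :=
  if t = 0 then 1 else -1

/-- Kloosterman sum `k_m(μ) = ∑_{x ∈ K, x ≠ 0} χ_m(x + μ x⁻¹)`. -/
def klooM (m : ℕ) {F : Type*} [Field F] [Fintype F] [DecidableEq F] (μ : F) : ℤ :=
  ∑ x ∈ Finset.univ.filter (fun x : F => x ^ (2 ^ m) = x ∧ x ≠ 0),
    eps (trM m (x + μ * x⁻¹))

/-- Kloosterman sum over the big field: `k_n(μ) = ∑_{x ∈ F, x ≠ 0} χ_n(x + μ x⁻¹)`. -/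
def klooN (m : ℕ) {F : Type*} [Field F] [Fintype F] [DecidableEq F] (μ : F) : ℤ :=
  ∑ x ∈ Finset.univ.filter (fun x : F => x ≠ 0), eps (trN m (x + μ * x⁻¹))

/-- Walsh transform of `h : F → F` (with values in `{0,1}`) at `a`. -/
def walsh (m : ℕ) {F : Type*} [Field F] [Fintype F] [DecidableEq F] (h : F → F) (a : F) : ℤ :=
  ∑ x : F, eps (h x + trN m (a * x))

/-- The Boolean function `f_{λ,μ}(x) = Tr_n(λ x^{2^m+1}) + Tr_n(x)·Tr_n(μ x^{2^m-1})`. -/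
def fFun (m : ℕ) {F : Type*} [Field F] (l μ : F) : F → F :=
  fun x => trN m (l * x ^ (2 ^ m + 1)) + trN m x * trN m (μ * x ^ (2 ^ m - 1))

/-- The Boolean function
`g_{λ,μ}(x) = (1 + Tr_n(x))·Tr_n(λ x^{2^m+1}) + Tr_n(x)·Tr_n(μ x^{2^m-1})`. -/
def gFun (m : ℕ) {F : Type*} [Field F] (l μ : F) : F → F :=
  fun x => (1 + trN m x) * trN m (l * x ^ (2 ^ m + 1)) +
    trN m x * trN m (μ * x ^ (2 ^ m - 1))


section
variable {F : Type*} [Field F] [Fintype F] [DecidableEq F]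

lemma aux_card_roots (P : F[X]) (hP : P ≠ 0) :
    (univ.filter fun x : F => P.eval x = 0).card ≤ P.natDegree := by
  have hsub : (univ.filter fun x : F => P.eval x = 0) ⊆ P.roots.toFinset := by
    intro x hx
    rw [Multiset.mem_toFinset, mem_roots hP]
    exact (mem_filter.mp hx).2
  calc (univ.filter fun x : F => P.eval x = 0).card
      ≤ P.roots.toFinset.card := Finset.card_le_card hsub
    _ ≤ Multiset.card P.roots := P.roots.toFinset_card_le
    _ ≤ P.natDegree := P.card_roots'

variable (m : ℕ)

lemma trM_add [CharP F 2] (x y : F) : trM m (x + y) = trM m x + trM m y := by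
  unfold trM
  rw [← Finset.sum_add_distrib]
  exact Finset.sum_congr rfl fun i _ => add_pow_char_pow x y 2 i

lemma trM_zero : trM m (0 : F) = 0 := by
  unfold trM
  refine Finset.sum_eq_zero fun i _ => zero_pow ?_
  positivity

lemma trN_zero : trN m (0 : F) = 0 := by
  unfold trN
  refine Finset.sum_eq_zero fun i _ => zero_pow ?_
  positivity

lemma trM_sq [CharP F 2] (k : F) (hk : k ^ (2:ℕ) ^ m = k) : trM m (k ^ 2) = trM m k := by
  have h1 : ∑ i ∈ range (m + 1), k ^ (2:ℕ) ^ i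
      = (∑ i ∈ range m, k ^ (2:ℕ) ^ (i + 1)) + k ^ (2:ℕ) ^ 0 := Finset.sum_range_succ' _ m
  have h2 : ∑ i ∈ range (m + 1), k ^ (2:ℕ) ^ i
      = (∑ i ∈ range m, k ^ (2:ℕ) ^ i) + k ^ (2:ℕ) ^ m := Finset.sum_range_succ _ m
  have h3 : trM m (k ^ 2) = ∑ i ∈ range m, k ^ (2:ℕ) ^ (i + 1) := by
    unfold trM
    refine Finset.sum_congr rfl fun i _ => ?_
    rw [← pow_mul, ← pow_succ']
  rw [h3]
  have : (∑ i ∈ range m, k ^ (2:ℕ) ^ (i + 1)) + k ^ (2:ℕ) ^ 0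
      = (∑ i ∈ range m, k ^ (2:ℕ) ^ i) + k ^ (2:ℕ) ^ m := by rw [← h1, h2]
  rw [pow_zero, pow_one, hk] at this
  unfold trM
  exact add_right_cancel this

lemma trM_bit [CharP F 2] (k : F) (hk : k ^ (2:ℕ) ^ m = k) :
    trM m k = 0 ∨ trM m k = 1 := by
  have hsq : (trM m k) ^ 2 = trM m (k ^ 2) := by
    unfold trM
    rw [sum_pow_char]
    exact Finset.sum_congr rfl fun i _ => by rw [← pow_mul, ← pow_mul, mul_comm]
  rw [trM_sq m k hk] at hsq
  have h2 : (2 : F) = 0 := CharTwo.two_eq_zero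
  have hz : trM m k * (trM m k + 1) = 0 := by linear_combination hsq + trM m k * h2
  rcases mul_eq_zero.mp hz with h | h
  · exact Or.inl h
  · right
    linear_combination h - h2

lemma trN_split [CharP F 2] (z : F) : trN m z = trM m (z + z ^ (2:ℕ) ^ m) := by
  rw [trM_add]
  unfold trN trM
  rw [two_mul, Finset.sum_range_add]
  congr 1
  refine Finset.sum_congr rfl fun i _ => ?_
  rw [pow_add, pow_mul]

end

section
variable {F : Type*} [Field F] [Fintype F] [DecidableEq F] (m : ℕ)

lemma pow_qq [CharP F 2] (hcard : Fintype.card F = 2 ^ (2 * m)) (x : F) :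
    (x ^ (2:ℕ) ^ m) ^ (2:ℕ) ^ m = x := by
  rw [← pow_mul, ← pow_add, ← two_mul, ← hcard]
  exact FiniteField.pow_card x

lemma card_K [CharP F 2] (hm : 0 < m) (hcard : Fintype.card F = 2 ^ (2 * m)) :
    (univ.filter fun y : F => y ^ (2:ℕ) ^ m = y).card = 2 ^ m := by
  have h2 : (2 : F) = 0 := CharTwo.two_eq_zero
  have hq1 : (1:ℕ) < 2 ^ m := Nat.one_lt_two_pow_iff.mpr (by omega)
  set P : F[X] := X ^ ((2:ℕ) ^ m) + X with hP
  have hPcoeff : P.coeff (2 ^ m) = 1 := by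
    rw [hP, coeff_add, coeff_X_pow, if_pos rfl, coeff_X, if_neg (by omega)]
    ring
  have hPne : P ≠ 0 := fun h => by simp [h] at hPcoeff
  have hPdeg : P.natDegree ≤ 2 ^ m := by
    refine le_trans (natDegree_add_le _ _) ?_
    simp only [natDegree_X_pow, natDegree_X]
    omega
  have hub : (univ.filter fun y : F => y ^ (2:ℕ) ^ m = y).card ≤ 2 ^ m := by
    refine le_trans (le_trans (Finset.card_le_card ?_) (aux_card_roots P hPne)) hPdeg
    intro y hy
    simp only [mem_filter, mem_univ, true_and] at hy ⊢
    rw [hP]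
    simp only [eval_add, eval_pow, eval_X, hy]
    exact CharTwo.add_self_eq_zero y
  set ψ : F → F := fun x => x ^ (2:ℕ) ^ m + x with hψ
  have hψadd : ∀ x y : F, ψ (x + y) = ψ x + ψ y := by
    intro x y
    simp only [hψ]
    rw [add_pow_char_pow x y 2 m]
    ring
  have hψK : ∀ x : F, ψ x ∈ (univ.filter fun y : F => y ^ (2:ℕ) ^ m = y) := by
    intro x
    simp only [mem_filter, mem_univ, true_and, hψ]
    rw [add_pow_char_pow _ x 2 m, pow_qq m hcard x]
    ring
  have heqz : ∀ u : F, u + u ^ (2:ℕ) ^ m = 0 → u ^ (2:ℕ) ^ m = u := by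
    intro u hu
    linear_combination hu - u * h2
  have hfib : ∀ t ∈ univ.image ψ, (univ.filter fun x => ψ x = t).card
      = (univ.filter fun y : F => y ^ (2:ℕ) ^ m = y).card := by
    intro t ht
    obtain ⟨x0, -, hx0⟩ := Finset.mem_image.mp ht
    refine Finset.card_bij' (fun x _ => x + x0) (fun y _ => y + x0) ?_ ?_ ?_ ?_
    · intro x hx
      simp only [mem_filter, mem_univ, true_and] at hx ⊢
      apply heqz
      have : ψ (x + x0) = 0 := by rw [hψadd, hx, hx0, CharTwo.add_self_eq_zero]
      rw [hψ] at this
      linear_combination this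
    · intro y hy
      simp only [mem_filter, mem_univ, true_and] at hy ⊢
      rw [hψadd, hx0]
      have : ψ y = 0 := by rw [hψ]; simp only; rw [hy, CharTwo.add_self_eq_zero]
      rw [this, zero_add]
    · intro x _
      have : x0 + x0 = 0 := CharTwo.add_self_eq_zero x0
      linear_combination this
    · intro y _
      have : x0 + x0 = 0 := CharTwo.add_self_eq_zero x0
      linear_combination this
  have hcount : Fintype.card F
      = (univ.image ψ).card * (univ.filter fun y : F => y ^ (2:ℕ) ^ m = y).card := by
    rw [← Finset.card_univ,
      Finset.card_eq_sum_card_fiberwise (fun x _ => Finset.mem_image_of_mem ψ (mem_univ x)),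
      Finset.sum_congr rfl hfib, Finset.sum_const, smul_eq_mul]
  have him : (univ.image ψ).card ≤ (univ.filter fun y : F => y ^ (2:ℕ) ^ m = y).card := by
    refine Finset.card_le_card ?_
    intro t ht
    obtain ⟨x, -, hx⟩ := Finset.mem_image.mp ht
    rw [← hx]; exact hψK x
  refine le_antisymm hub ?_
  by_contra hne
  push_neg at hne
  have hlt := hne
  have hmm : (2:ℕ) ^ m * 2 ^ m = 2 ^ (2 * m) := by rw [← pow_add, two_mul]
  have : (2:ℕ) ^ (2 * m)
      ≤ (univ.filter fun y : F => y ^ (2:ℕ) ^ m = y).card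
        * (univ.filter fun y : F => y ^ (2:ℕ) ^ m = y).card := by
    calc (2:ℕ) ^ (2*m) = Fintype.card F := hcard.symm
      _ = _ := hcount
      _ ≤ _ := Nat.mul_le_mul_right _ him
  have hcontra : (univ.filter fun y : F => y ^ (2:ℕ) ^ m = y).card
      * (univ.filter fun y : F => y ^ (2:ℕ) ^ m = y).card < 2 ^ (2*m) := by
    rw [← hmm]
    exact Nat.mul_lt_mul_of_lt_of_lt hlt hlt
  omega

end

section
variable {F : Type*} [Field F] [Fintype F] [DecidableEq F] (m : ℕ)

lemma exists_tr_ne [CharP F 2] (hm : 0 < m) (hcard : Fintype.card F = 2 ^ (2 * m)) :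
    ∃ z : F, z ^ (2:ℕ) ^ m = z ∧ trM m z ≠ 0 := by
  by_contra hno
  push_neg at hno
  set P : F[X] := ∑ i ∈ range m, X ^ ((2:ℕ) ^ i) with hP
  have hPcoeff : P.coeff (2 ^ (m - 1)) = 1 := by
    rw [hP, finset_sum_coeff]
    have : ∀ i ∈ range m, (X ^ ((2:ℕ) ^ i) : F[X]).coeff (2 ^ (m-1))
        = if i = m - 1 then 1 else 0 := by
      intro i hi
      rw [coeff_X_pow]
      congr 1
      rw [eq_iff_iff]
      constructor
      · intro h; exact Nat.pow_right_injective (le_refl 2) h.symm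
      · intro h; rw [h]
    rw [Finset.sum_congr rfl this, Finset.sum_ite_eq' (range m) (m-1)]
    rw [if_pos (mem_range.mpr (by omega))]
  have hPne : P ≠ 0 := fun h => by simp [h] at hPcoeff
  have hPdeg : P.natDegree ≤ 2 ^ (m - 1) := by
    refine natDegree_sum_le_of_forall_le _ _ ?_
    intro i hi
    rw [natDegree_X_pow]
    have := mem_range.mp hi
    exact Nat.pow_le_pow_right (by omega) (by omega)
  have heval : ∀ z : F, P.eval z = trM m z := by
    intro z
    rw [hP, eval_finset_sum]
    unfold trM
    exact Finset.sum_congr rfl fun i _ => by rw [eval_pow, eval_X]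
  have hsub : (univ.filter fun y : F => y ^ (2:ℕ) ^ m = y)
      ⊆ (univ.filter fun x : F => P.eval x = 0) := by
    intro y hy
    simp only [mem_filter, mem_univ, true_and] at hy ⊢
    rw [heval]
    exact hno y hy
  have := le_trans (le_trans (Finset.card_le_card hsub) (aux_card_roots P hPne)) hPdeg
  rw [card_K m hm hcard] at this
  have : (2:ℕ) ^ (m-1) < 2 ^ m := Nat.pow_lt_pow_right (by omega) (by omega)
  omega

lemma eps_zero : eps (0 : F) = 1 := if_pos rfl

lemma sum_eps_K [CharP F 2] (hm : 0 < m) (hcard : Fintype.card F = 2 ^ (2 * m))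
    (c : F) (hc : c ^ (2:ℕ) ^ m = c) :
    ∑ y ∈ univ.filter (fun y : F => y ^ (2:ℕ) ^ m = y ∧ y ≠ 0), eps (trM m (y * c))
      = if c = 0 then (2:ℤ) ^ m - 1 else -1 := by
  have h2 : (2 : F) = 0 := CharTwo.two_eq_zero
  have hKerase : univ.filter (fun y : F => y ^ (2:ℕ) ^ m = y ∧ y ≠ 0)
      = (univ.filter fun y : F => y ^ (2:ℕ) ^ m = y).erase 0 := by
    ext y
    simp only [mem_filter, mem_univ, true_and, mem_erase]
    tauto
  have h0K : (0:F) ∈ univ.filter fun y : F => y ^ (2:ℕ) ^ m = y := by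
    simp only [mem_filter, mem_univ, true_and]
    exact zero_pow (by positivity)
  by_cases hc0 : c = 0
  · rw [if_pos hc0, hc0]
    have : ∀ y ∈ univ.filter (fun y : F => y ^ (2:ℕ) ^ m = y ∧ y ≠ 0),
        eps (trM m (y * 0)) = 1 := by
      intro y _
      rw [mul_zero, trM_zero, eps_zero]
    rw [Finset.sum_congr rfl this, Finset.sum_const, hKerase,
      Finset.card_erase_of_mem h0K, card_K m hm hcard]
    have h1 : (1:ℕ) ≤ 2 ^ m := Nat.one_le_two_pow
    rw [nsmul_eq_mul, mul_one, Nat.cast_sub h1]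
    push_cast
    ring
  · rw [if_neg hc0]
    obtain ⟨z, hzK, hztr⟩ := exists_tr_ne m hm hcard
    set y0 : F := z * c⁻¹ with hy0
    have hy0K : y0 ^ (2:ℕ) ^ m = y0 := by rw [hy0, mul_pow, inv_pow, hzK, hc]
    have hy0c : y0 * c = z := by
      rw [hy0]
      field_simp
    have hy0tr : trM m (y0 * c) = 1 := by
      rw [hy0c]
      rcases trM_bit m z hzK with h | h
      · exact absurd h hztr
      · exact h
    -- sum over all of K is zero
    have hbitc : ∀ y : F, y ^ (2:ℕ) ^ m = y → trM m (y*c) = 0 ∨ trM m (y*c) = 1 := by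
      intro y hy
      exact trM_bit m (y*c) (by rw [mul_pow, hy, hc])
    have hKsum : ∑ y ∈ univ.filter (fun y : F => y ^ (2:ℕ) ^ m = y), eps (trM m (y * c))
        = 0 := by
      set K := univ.filter (fun y : F => y ^ (2:ℕ) ^ m = y) with hK
      have hsplit := Finset.sum_filter_add_sum_filter_not K
        (fun y => trM m (y * c) = 0) (fun y => eps (trM m (y * c)))
      have t0 : ∀ y ∈ K.filter (fun y => trM m (y * c) = 0), eps (trM m (y * c)) = 1 :=
        fun y hy => by rw [(Finset.mem_filter.mp hy).2, eps_zero]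
      have e0 : ∑ y ∈ K.filter (fun y => trM m (y * c) = 0), eps (trM m (y * c))
          = ((K.filter (fun y => trM m (y * c) = 0)).card : ℤ) := by
        rw [Finset.sum_congr rfl t0, Finset.sum_const, nsmul_eq_mul, mul_one]
      have t1 : ∀ y ∈ K.filter (fun y => ¬ trM m (y * c) = 0), eps (trM m (y * c)) = -1 :=
        fun y hy => by rw [eps, if_neg (Finset.mem_filter.mp hy).2]
      have e1 : ∑ y ∈ K.filter (fun y => ¬ trM m (y * c) = 0), eps (trM m (y * c))
          = -((K.filter (fun y => ¬ trM m (y * c) = 0)).card : ℤ) := by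
        rw [Finset.sum_congr rfl t1, Finset.sum_const, nsmul_eq_mul, mul_neg, mul_one]
      have hmem1 : ∀ y, y ∈ K.filter (fun y => trM m (y * c) = 0) →
          y + y0 ∈ K.filter (fun y => ¬ trM m (y * c) = 0) := by
        intro y hy
        obtain ⟨hyK, hy0'⟩ := Finset.mem_filter.mp hy
        have hyK' := (Finset.mem_filter.mp hyK).2
        refine Finset.mem_filter.mpr ⟨?_, ?_⟩
        · simp only [hK, mem_filter, mem_univ, true_and]
          rw [add_pow_char_pow y y0 2 m, hyK', hy0K]
        · rw [add_mul, trM_add, hy0', hy0tr, zero_add]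
          exact one_ne_zero
      have hmem2 : ∀ y, y ∈ K.filter (fun y => ¬ trM m (y * c) = 0) →
          y + y0 ∈ K.filter (fun y => trM m (y * c) = 0) := by
        intro y hy
        obtain ⟨hyK, hy1⟩ := Finset.mem_filter.mp hy
        have hyK' := (Finset.mem_filter.mp hyK).2
        refine Finset.mem_filter.mpr ⟨?_, ?_⟩
        · simp only [hK, mem_filter, mem_univ, true_and]
          rw [add_pow_char_pow y y0 2 m, hyK', hy0K]
        · rw [add_mul, trM_add, hy0tr]
          rcases hbitc y hyK' with h | h
          · exact absurd h hy1
          · rw [h]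
            linear_combination h2
      have hinv : ∀ y : F, y + y0 + y0 = y := by
        intro y
        have := CharTwo.add_self_eq_zero y0
        linear_combination this
      have hcardeq : (K.filter (fun y => trM m (y * c) = 0)).card
          = (K.filter (fun y => ¬ trM m (y * c) = 0)).card := by
        refine Finset.card_bij' (fun y _ => y + y0) (fun y _ => y + y0)
          (fun y hy => hmem1 y hy) (fun y hy => hmem2 y hy)
          (fun y _ => hinv y) (fun y _ => hinv y)
      rw [← hsplit, e0, e1, hcardeq]
      ring
    have := Finset.sum_erase_add
      ((univ.filter fun y : F => y ^ (2:ℕ) ^ m = y)) (fun y => eps (trM m (y * c))) h0K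
    rw [hKsum] at this
    rw [hKerase]
    have h00 : eps (trM m ((0:F) * c)) = 1 := by rw [zero_mul, trM_zero, eps_zero]
    linarith [this, h00]

end

section
variable {F : Type*} [Field F] [Fintype F] [DecidableEq F] (m : ℕ)

lemma eps_one : eps (1 : F) = -1 := if_neg one_ne_zero

lemma char2_eq_of_add_eq_zero [CharP F 2] (x y : F) (h : x + y = 0) : x = y := by
  have h2 : (2:F) = 0 := CharTwo.two_eq_zero
  linear_combination h - y * h2

lemma exists_sqrt_K [CharP F 2] (k : F) (hk : k ^ (2:ℕ) ^ m = k) :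
    ∃ y : F, y ^ (2:ℕ) ^ m = y ∧ y ^ 2 = k := by
  set K := univ.filter fun y : F => y ^ (2:ℕ) ^ m = y with hKdef
  have hsub : K.image (fun y => y ^ 2) ⊆ K := by
    intro t ht
    obtain ⟨y, hy, rfl⟩ := Finset.mem_image.mp ht
    have hy' := (Finset.mem_filter.mp hy).2
    simp only [hKdef, mem_filter, mem_univ, true_and]
    rw [← pow_mul, mul_comm, pow_mul, hy']
  have hinj : Set.InjOn (fun y : F => y ^ 2) K := by
    intro x hx y hy hxy
    simp only at hxy
    have hsq : (x + y) ^ 2 = 0 := by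
      rw [CharTwo.add_sq, hxy, CharTwo.add_self_eq_zero]
    exact char2_eq_of_add_eq_zero _ _ (pow_eq_zero_iff (n := 2) (by omega) |>.mp hsq)
  have himg : K.image (fun y => y ^ 2) = K :=
    Finset.eq_of_subset_of_card_le hsub (le_of_eq (Finset.card_image_of_injOn hinj).symm)
  have hkK : k ∈ K := by simp only [hKdef, mem_filter, mem_univ, true_and]; exact hk
  rw [← himg] at hkK
  obtain ⟨y, hyK, hy2⟩ := Finset.mem_image.mp hkK
  exact ⟨y, (Finset.mem_filter.mp hyK).2, hy2⟩

lemma polar [CharP F 2] (hcard : Fintype.card F = 2 ^ (2 * m)) (g : F → ℤ) :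
    ∑ x ∈ univ.erase (0:F), g x
      = ∑ p ∈ (univ.filter fun y : F => y ^ (2:ℕ) ^ m = y ∧ y ≠ 0) ×ˢ
          (univ.filter fun u : F => u ^ ((2:ℕ) ^ m + 1) = 1), g (p.1 * p.2) := by
  have h2F : (2:F) = 0 := CharTwo.two_eq_zero
  refine (Finset.sum_bij (fun p _ => p.1 * p.2) ?_ ?_ ?_ fun p _ => rfl).symm
  · rintro ⟨y, u⟩ hp
    obtain ⟨hy, hu⟩ := Finset.mem_product.mp hp
    obtain ⟨hyK, hy0⟩ := (Finset.mem_filter.mp hy).2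
    have hu1 := (Finset.mem_filter.mp hu).2
    have hu0 : u ≠ 0 := by
      intro h
      rw [h, zero_pow (by positivity)] at hu1
      exact zero_ne_one hu1
    exact Finset.mem_erase.mpr ⟨mul_ne_zero hy0 hu0, Finset.mem_univ _⟩
  · rintro ⟨y1, u1⟩ hp1 ⟨y2, u2⟩ hp2 heq
    obtain ⟨hy1, hu1⟩ := Finset.mem_product.mp hp1
    obtain ⟨hy2, hu2⟩ := Finset.mem_product.mp hp2
    obtain ⟨hy1K, hy10⟩ := (Finset.mem_filter.mp hy1).2
    obtain ⟨hy2K, hy20⟩ := (Finset.mem_filter.mp hy2).2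
    have hu11 := (Finset.mem_filter.mp hu1).2
    have hu21 := (Finset.mem_filter.mp hu2).2
    simp only at heq
    have hsq : ∀ (y u : F), y ^ (2:ℕ) ^ m = y → u ^ ((2:ℕ) ^ m + 1) = 1 →
        (y * u) ^ ((2:ℕ) ^ m + 1) = y * y := by
      intro y u hy hu
      rw [mul_pow, hu, mul_one, pow_succ, hy]
    have hyy : y1 * y1 = y2 * y2 := by
      rw [← hsq y1 u1 hy1K hu11, ← hsq y2 u2 hy2K hu21, heq]
    have hy12 : y1 = y2 := by
      have hz : (y1 + y2) ^ 2 = 0 := by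
        rw [CharTwo.add_sq]
        linear_combination hyy + y2 ^ 2 * h2F
      exact char2_eq_of_add_eq_zero _ _ (pow_eq_zero_iff (n := 2) (by omega) |>.mp hz)
    have hu12 : u1 = u2 := by
      apply mul_left_cancel₀ hy10
      rw [heq, hy12]
    simp [hy12, hu12]
  · intro x hx
    have hx0 : x ≠ 0 := (Finset.mem_erase.mp hx).1
    set k : F := x ^ (2:ℕ) ^ m * x with hkdef
    have hkK : k ^ (2:ℕ) ^ m = k := by
      rw [hkdef, mul_pow, pow_qq m hcard x, mul_comm]
    obtain ⟨y, hyK, hy2⟩ := exists_sqrt_K m k hkK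
    have hy0 : y ≠ 0 := by
      intro h
      rw [h] at hy2
      have : k = 0 := by rw [← hy2]; ring
      rw [hkdef] at this
      exact mul_ne_zero (pow_ne_zero _ hx0) hx0 this
    refine ⟨⟨y, y⁻¹ * x⟩, ?_, ?_⟩
    · refine Finset.mem_product.mpr ⟨?_, ?_⟩
      · exact Finset.mem_filter.mpr ⟨Finset.mem_univ _, hyK, hy0⟩
      · refine Finset.mem_filter.mpr ⟨Finset.mem_univ _, ?_⟩
        rw [pow_succ, mul_pow, inv_pow, hyK]
        have hyy : y * y ≠ 0 := mul_ne_zero hy0 hy0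
        field_simp
        linear_combination hy2 + (x * x ^ (2:ℕ) ^ m - y ^ 2) * h2F
    · simp only
      field_simp

lemma Dcard [CharP F 2] (b : F) :
    ((univ.filter fun u : F => u ^ ((2:ℕ) ^ m + 1) = 1).filter
      fun u => b * u + b ^ (2:ℕ) ^ m * u⁻¹ = 1).card ≤ 2 := by
  have h2 : (2:F) = 0 := CharTwo.two_eq_zero
  by_contra hgt
  push_neg at hgt
  obtain ⟨u1, u2, u3, h1, h2', h3, h12, h13, h23⟩ := Finset.two_lt_card_iff.mp hgt
  have unpack : ∀ u : F, u ∈ (univ.filter fun u : F => u ^ ((2:ℕ) ^ m + 1) = 1).filter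
      (fun u => b * u + b ^ (2:ℕ) ^ m * u⁻¹ = 1) →
      u ≠ 0 ∧ b * u + b ^ (2:ℕ) ^ m * u⁻¹ = 1 := by
    intro u hu
    obtain ⟨huU, huc⟩ := Finset.mem_filter.mp hu
    have hu1 := (Finset.mem_filter.mp huU).2
    refine ⟨?_, huc⟩
    intro h
    rw [h, zero_pow (by positivity)] at hu1
    exact zero_ne_one hu1
  obtain ⟨hu1ne, hc1⟩ := unpack u1 h1
  obtain ⟨hu2ne, hc2⟩ := unpack u2 h2'
  obtain ⟨hu3ne, hc3⟩ := unpack u3 h3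
  have hb : b ≠ 0 := by
    intro h
    rw [h, zero_pow (by positivity), zero_mul, zero_mul, add_zero] at hc1
    exact zero_ne_one hc1
  have e : ∀ u : F, u ≠ 0 → b * u + b ^ (2:ℕ) ^ m * u⁻¹ = 1 →
      b * u ^ 2 + b ^ (2:ℕ) ^ m = u := by
    intro u hune hc
    have h := congrArg (fun t => t * u) hc
    have hii : u⁻¹ * u = 1 := inv_mul_cancel₀ hune
    linear_combination h - b ^ (2:ℕ) ^ m * hii
  have e1 := e u1 hu1ne hc1
  have e2 := e u2 hu2ne hc2
  have e3 := e u3 hu3ne hc3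
  have key : ∀ u u' : F, b * u ^ 2 + b ^ (2:ℕ) ^ m = u → b * u' ^ 2 + b ^ (2:ℕ) ^ m = u' →
      b * (u + u') * (u + u') = u + u' := by
    intro u u' eu eu'
    linear_combination eu - eu' + (b * u * u' + b * u' ^ 2 - u') * h2
  have hne : ∀ u u' : F, u ≠ u' → u + u' ≠ 0 := by
    intro u u' hne h
    exact hne (char2_eq_of_add_eq_zero _ _ h)
  have d12 : b * (u1 + u2) = 1 :=
    mul_right_cancel₀ (hne u1 u2 h12) (by linear_combination key u1 u2 e1 e2)
  have d13 : b * (u1 + u3) = 1 :=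
    mul_right_cancel₀ (hne u1 u3 h13) (by linear_combination key u1 u3 e1 e3)
  have : b * u2 = b * u3 := by linear_combination d12 - d13
  exact h23 (mul_left_cancel₀ hb this)

lemma eps_expand (α γ β δ : F) (hβ : β = 0 ∨ β = 1) (hδ : δ = 0 ∨ δ = 1) :
    2 * eps (α + β * δ + γ)
      = (1 + eps δ) * eps (α + γ) + (1 - eps δ) * eps (α + β + γ) := by
  rcases hβ with rfl | rfl
  · simp only [zero_mul, add_zero]
    ring
  · rcases hδ with rfl | rfl
    · simp only [mul_zero, add_zero, eps_zero]
      ring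
    · simp only [mul_one, eps_one]
      ring

end
theorem stmt8 (m : ℕ) (hm : 0 < m) (F : Type*) [Field F] [Fintype F] [DecidableEq F]
    (hcard : Fintype.card F = 2 ^ (2 * m))
    (l : F) (hl : l + l ^ (2 ^ m) = 1)
    (μ : F) (hμK : μ ^ (2 ^ m) = μ) (hμ0 : μ ≠ 0) (a : F) :
    walsh m (fFun m l μ) a ∈
      ({0, 2 ^ m, -(2 ^ m), 2 ^ (m + 1), 3 * 2 ^ m} : Set ℤ) := by
  classical
  -- characteristic 2
  have hchar2 : CharP F 2 := by
    obtain ⟨p, hp⟩ := CharP.exists F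
    haveI := hp
    obtain ⟨n, hpp, hcardp⟩ := FiniteField.card F p
    have hdvd : p ∣ 2 ^ (2 * m) := by
      rw [← hcard, hcardp]
      exact dvd_pow_self p n.pos.ne'
    have hpd2 : p ∣ 2 := hpp.dvd_of_dvd_pow hdvd
    have hpe : p = 2 := (Nat.prime_dvd_prime_iff_eq hpp Nat.prime_two).mp hpd2
    rwa [hpe] at hp
  haveI := hchar2
  have h2F : (2 : F) = 0 := CharTwo.two_eq_zero
  have hq2 : (2:ℕ) ≤ 2 ^ m := by
    calc (2:ℕ) = 2 ^ 1 := (pow_one 2).symm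
    _ ≤ 2 ^ m := Nat.pow_le_pow_right (by omega) (by omega)
  set Ks : Finset F := univ.filter (fun y : F => y ^ (2:ℕ) ^ m = y ∧ y ≠ 0) with hKs
  set U : Finset F := univ.filter (fun u : F => u ^ ((2:ℕ) ^ m + 1) = 1) with hU
  set g : F → ℤ := fun x => eps (fFun m l μ x + trN m (a * x)) with hg
  -- cardinalities
  have hKscard : Ks.card = 2 ^ m - 1 := by
    have hKerase : Ks = (univ.filter fun y : F => y ^ (2:ℕ) ^ m = y).erase 0 := by
      ext y
      simp only [hKs, mem_filter, mem_univ, true_and, mem_erase]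
      tauto
    have h0K : (0:F) ∈ univ.filter fun y : F => y ^ (2:ℕ) ^ m = y := by
      simp only [mem_filter, mem_univ, true_and]
      exact zero_pow (by positivity)
    rw [hKerase, Finset.card_erase_of_mem h0K, card_K m hm hcard]
  have hUcard : U.card = 2 ^ m + 1 := by
    have hpolar1 := polar m hcard (fun _ => (1:ℤ))
    rw [Finset.sum_const, Finset.sum_const] at hpolar1
    have hcc : ((univ.erase (0:F)).card : ℤ) = ((Ks ×ˢ U).card : ℤ) := by
      simpa only [nsmul_eq_mul, mul_one] using hpolar1
    have hcc' : (univ.erase (0:F)).card = (Ks ×ˢ U).card := by exact_mod_cast hcc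
    rw [Finset.card_erase_of_mem (mem_univ 0), Finset.card_univ, hcard,
      Finset.card_product, hKscard] at hcc'
    set b : ℕ := 2 ^ m - 1 with hb
    have hbval : 2 ^ m = b + 1 := by omega
    have h2m : (2:ℕ) ^ (2*m) = (b+1) * (b+1) := by
      rw [two_mul, pow_add, hbval]
    rw [h2m] at hcc'
    have hexp : (b+1) * (b+1) - 1 = b * (b + 2) := by
      have : (b+1) * (b+1) = b * (b+2) + 1 := by ring
      omega
    rw [hexp] at hcc'
    have hbpos : 0 < b := by
      have : (2:ℕ) ≤ 2 ^ m := hq2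
      omega
    have := Nat.eq_of_mul_eq_mul_left hbpos hcc'
    omega
  -- the inner rewriting
  have hufacts : ∀ u ∈ U, u ≠ 0 ∧ u ^ (2:ℕ) ^ m = u⁻¹ := by
    intro u hu
    have hu1 := (Finset.mem_filter.mp hu).2
    have hu0 : u ≠ 0 := by
      intro h
      rw [h, zero_pow (by positivity)] at hu1
      exact zero_ne_one hu1
    refine ⟨hu0, ?_⟩
    apply eq_inv_of_mul_eq_one_left
    rw [← pow_succ, hu1]
  have hinner : ∀ u ∈ U, ∀ y ∈ Ks,
      2 * g (y * u)
        = (1 + eps (trM m (μ * (u + u⁻¹) ^ 2)))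
            * eps (trM m (y * (1 + (a * u + a ^ (2:ℕ) ^ m * u⁻¹))))
          + (1 - eps (trM m (μ * (u + u⁻¹) ^ 2)))
            * eps (trM m (y * (1 + (u + u⁻¹) + (a * u + a ^ (2:ℕ) ^ m * u⁻¹)))) := by
    intro u hu y hy
    obtain ⟨hu0, huq⟩ := hufacts u hu
    have hu1 := (Finset.mem_filter.mp hu).2
    obtain ⟨hyK, hy0⟩ := (Finset.mem_filter.mp hy).2
    have hx0 : y * u ≠ 0 := mul_ne_zero hy0 hu0
    -- powers
    have h_pow1 : (y * u) ^ ((2:ℕ) ^ m + 1) = y * y := by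
      rw [mul_pow, hu1, mul_one, pow_succ, hyK]
    have h_pow2 : (y * u) ^ ((2:ℕ) ^ m - 1) = (u⁻¹) ^ 2 := by
      have hsplit : (y*u) ^ ((2:ℕ) ^ m - 1) * (y*u) ^ 2 = (y*u) ^ ((2:ℕ) ^ m + 1) := by
        rw [← pow_add]
        congr 1
        omega
      rw [h_pow1] at hsplit
      have hr : (u⁻¹) ^ 2 * (y*u) ^ 2 = y * y := by
        field_simp
      apply mul_right_cancel₀ (pow_ne_zero 2 hx0)
      rw [hsplit, hr]
    -- trace computations
    have h_t1 : trN m (l * (y * u) ^ ((2:ℕ) ^ m + 1)) = trM m y := by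
      rw [h_pow1, trN_split m]
      have harg : l * (y * y) + (l * (y * y)) ^ (2:ℕ) ^ m = y ^ 2 := by
        rw [mul_pow, mul_pow, hyK]
        linear_combination (y * y) * hl
      rw [harg, trM_sq m y hyK]
    have h_t2 : trN m (μ * (y * u) ^ ((2:ℕ) ^ m - 1)) = trM m (μ * (u + u⁻¹) ^ 2) := by
      rw [h_pow2, trN_split m]
      have hiq : (u⁻¹) ^ (2:ℕ) ^ m = u := by
        rw [inv_pow, huq, inv_inv]
      have harg : μ * u⁻¹ ^ 2 + (μ * u⁻¹ ^ 2) ^ (2:ℕ) ^ m = μ * (u + u⁻¹) ^ 2 := by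
        rw [mul_pow, ← pow_mul, mul_comm ((2:ℕ)) ((2:ℕ)^m), pow_mul, hiq, hμK]
        linear_combination (-(μ * u * u⁻¹)) * h2F
      rw [harg]
    have h_t3 : trN m (y * u) = trM m (y * (u + u⁻¹)) := by
      rw [trN_split m]
      congr 1
      rw [mul_pow, hyK, huq]
      ring
    have h_t4 : trN m (a * (y * u)) = trM m (y * (a * u + a ^ (2:ℕ) ^ m * u⁻¹)) := by
      rw [trN_split m]
      congr 1
      rw [mul_pow, mul_pow, hyK, huq]
      ring
    have hfx : fFun m l μ (y * u) + trN m (a * (y * u))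
        = trM m y + trM m (y * (u + u⁻¹)) * trM m (μ * (u + u⁻¹) ^ 2)
          + trM m (y * (a * u + a ^ (2:ℕ) ^ m * u⁻¹)) := by
      show trN m (l * (y*u) ^ (2 ^ m + 1)) + trN m (y*u) * trN m (μ * (y*u) ^ (2 ^ m - 1))
          + trN m (a * (y * u)) = _
      rw [h_t1, h_t2, h_t3, h_t4]
    -- bits
    have hvK : (u + u⁻¹) ^ (2:ℕ) ^ m = u + u⁻¹ := by
      rw [add_pow_char_pow u u⁻¹ 2 m, huq, inv_pow, huq, inv_inv, add_comm]
    have hwK : (a * u + a ^ (2:ℕ) ^ m * u⁻¹) ^ (2:ℕ) ^ m = a * u + a ^ (2:ℕ) ^ m * u⁻¹ := by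
      rw [add_pow_char_pow _ _ 2 m, mul_pow, mul_pow, huq, inv_pow, huq, inv_inv,
        pow_qq m hcard a, add_comm]
    have hβ : trM m (y * (u + u⁻¹)) = 0 ∨ trM m (y * (u + u⁻¹)) = 1 := by
      apply trM_bit
      rw [mul_pow, hyK, hvK]
    have hδ : trM m (μ * (u + u⁻¹) ^ 2) = 0 ∨ trM m (μ * (u + u⁻¹) ^ 2) = 1 := by
      apply trM_bit
      rw [mul_pow, hμK, ← pow_mul, mul_comm ((2:ℕ)) ((2:ℕ)^m), pow_mul, hvK]
    have hexp := eps_expand (trM m y) (trM m (y * (a * u + a ^ (2:ℕ) ^ m * u⁻¹)))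
      (trM m (y * (u + u⁻¹))) (trM m (μ * (u + u⁻¹) ^ 2)) hβ hδ
    have hαγ : trM m y + trM m (y * (a * u + a ^ (2:ℕ) ^ m * u⁻¹))
        = trM m (y * (1 + (a * u + a ^ (2:ℕ) ^ m * u⁻¹))) := by
      rw [← trM_add]
      congr 1
      ring
    have hαβγ : trM m y + trM m (y * (u + u⁻¹)) + trM m (y * (a * u + a ^ (2:ℕ) ^ m * u⁻¹))
        = trM m (y * (1 + (u + u⁻¹) + (a * u + a ^ (2:ℕ) ^ m * u⁻¹))) := by
      rw [← trM_add, ← trM_add]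
      congr 1
      ring
    rw [hg]
    simp only
    rw [hfx, hexp, hαγ, hαβγ]
  -- closure of the filter conditions under Frobenius
  have hc1K : ∀ u ∈ U, (1 + (a * u + a ^ (2:ℕ) ^ m * u⁻¹)) ^ (2:ℕ) ^ m
      = 1 + (a * u + a ^ (2:ℕ) ^ m * u⁻¹) := by
    intro u hu
    obtain ⟨hu0, huq⟩ := hufacts u hu
    rw [add_pow_char_pow _ _ 2 m, one_pow, add_pow_char_pow _ _ 2 m, mul_pow, mul_pow,
      huq, inv_pow, huq, inv_inv, pow_qq m hcard a]
    ring
  have hc2K : ∀ u ∈ U, (1 + (u + u⁻¹) + (a * u + a ^ (2:ℕ) ^ m * u⁻¹)) ^ (2:ℕ) ^ m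
      = 1 + (u + u⁻¹) + (a * u + a ^ (2:ℕ) ^ m * u⁻¹) := by
    intro u hu
    obtain ⟨hu0, huq⟩ := hufacts u hu
    rw [add_pow_char_pow _ _ 2 m, add_pow_char_pow _ _ 2 m, one_pow,
      add_pow_char_pow _ _ 2 m, add_pow_char_pow _ _ 2 m, mul_pow, mul_pow,
      huq, inv_pow, huq, inv_inv, pow_qq m hcard a]
    ring
  -- step A : peel off x = 0
  have hwalsh : walsh m (fFun m l μ) a = ∑ x : F, g x := rfl
  have hg0 : g 0 = 1 := by
    rw [hg]
    simp only
    have h1 : fFun m l μ 0 = 0 := by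
      show trN m (l * 0 ^ (2 ^ m + 1)) + trN m 0 * trN m (μ * 0 ^ (2 ^ m - 1)) = 0
      rw [zero_pow (by positivity), zero_pow (by omega), mul_zero, mul_zero, trN_zero]
      ring
    rw [h1, mul_zero, trN_zero, add_zero, eps_zero]
  have hsplit0 : ∑ x : F, g x = g 0 + ∑ x ∈ univ.erase 0, g x := by
    rw [← Finset.sum_erase_add univ g (mem_univ 0)]
    ring
  have hmain : 2 * walsh m (fFun m l μ) a = 2 + ∑ u ∈ U, ∑ y ∈ Ks, 2 * g (y * u) := by
    calc 2 * walsh m (fFun m l μ) a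
        = 2 * (1 + ∑ x ∈ univ.erase 0, g x) := by rw [hwalsh, hsplit0, hg0]
      _ = 2 + 2 * ∑ x ∈ univ.erase 0, g x := by ring
      _ = 2 + 2 * ∑ p ∈ Ks ×ˢ U, g (p.1 * p.2) := by rw [polar m hcard g]
      _ = 2 + 2 * ∑ y ∈ Ks, ∑ u ∈ U, g (y * u) := by rw [Finset.sum_product]
      _ = 2 + 2 * ∑ u ∈ U, ∑ y ∈ Ks, g (y * u) := by rw [Finset.sum_comm]
      _ = 2 + ∑ u ∈ U, ∑ y ∈ Ks, 2 * g (y * u) := by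
          simp [Finset.mul_sum]
  -- step B : evaluate the inner sums over Ks
  have hOsum : ∀ u ∈ U, ∑ y ∈ Ks, 2 * g (y * u)
      = (1 + eps (trM m (μ * (u + u⁻¹) ^ 2)))
          * (if 1 + (a * u + a ^ (2:ℕ) ^ m * u⁻¹) = 0 then (2:ℤ) ^ m - 1 else -1)
        + (1 - eps (trM m (μ * (u + u⁻¹) ^ 2)))
          * (if 1 + (u + u⁻¹) + (a * u + a ^ (2:ℕ) ^ m * u⁻¹) = 0
              then (2:ℤ) ^ m - 1 else -1) := by
    intro u hu
    rw [Finset.sum_congr rfl (hinner u hu), Finset.sum_add_distrib,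
      ← Finset.mul_sum, ← Finset.mul_sum,
      sum_eps_K m hm hcard _ (hc1K u hu), sum_eps_K m hm hcard _ (hc2K u hu)]
  -- step C : indicator form
  have hIform : ∀ (e X : ℤ) (P Q : Prop) (_ : Decidable P) (_ : Decidable Q),
      (1 + e) * (if P then X - 1 else -1) + (1 - e) * (if Q then X - 1 else -1)
        = X * ((if P then (1:ℤ) else 0) * (1 + e) + (if Q then (1:ℤ) else 0) * (1 - e))
          - 2 := by
    intro e X P Q _ _
    split_ifs <;> ring
  have hstep : ∑ u ∈ U, ∑ y ∈ Ks, 2 * g (y * u)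
      = (2:ℤ) ^ m * ∑ u ∈ U,
          ((if 1 + (a * u + a ^ (2:ℕ) ^ m * u⁻¹) = 0 then (1:ℤ) else 0)
              * (1 + eps (trM m (μ * (u + u⁻¹) ^ 2)))
            + (if 1 + (u + u⁻¹) + (a * u + a ^ (2:ℕ) ^ m * u⁻¹) = 0 then (1:ℤ) else 0)
              * (1 - eps (trM m (μ * (u + u⁻¹) ^ 2))))
        - 2 * ((2:ℤ) ^ m + 1) := by
    rw [Finset.sum_congr rfl hOsum]
    rw [Finset.sum_congr rfl (fun u _ => hIform (eps (trM m (μ * (u + u⁻¹) ^ 2)))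
      ((2:ℤ) ^ m) (1 + (a * u + a ^ (2:ℕ) ^ m * u⁻¹) = 0)
      (1 + (u + u⁻¹) + (a * u + a ^ (2:ℕ) ^ m * u⁻¹) = 0)
      (by infer_instance) (by infer_instance))]
    rw [Finset.sum_sub_distrib, ← Finset.mul_sum, Finset.sum_const, hUcard]
    push_cast
    ring
  -- step D : indicator sums as cardinalities
  set A : ℕ := (U.filter (fun u => 1 + (a * u + a ^ (2:ℕ) ^ m * u⁻¹) = 0
      ∧ trM m (μ * (u + u⁻¹) ^ 2) = 0)).card with hAdef
  set B : ℕ := (U.filter (fun u => 1 + (u + u⁻¹) + (a * u + a ^ (2:ℕ) ^ m * u⁻¹) = 0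
      ∧ ¬ trM m (μ * (u + u⁻¹) ^ 2) = 0)).card with hBdef
  have hsum1 : ∑ u ∈ U, (if 1 + (a * u + a ^ (2:ℕ) ^ m * u⁻¹) = 0 then (1:ℤ) else 0)
        * (1 + eps (trM m (μ * (u + u⁻¹) ^ 2))) = 2 * (A:ℤ) := by
    have e1 : ∀ u ∈ U, (if 1 + (a * u + a ^ (2:ℕ) ^ m * u⁻¹) = 0 then (1:ℤ) else 0)
        * (1 + eps (trM m (μ * (u + u⁻¹) ^ 2)))
        = if 1 + (a * u + a ^ (2:ℕ) ^ m * u⁻¹) = 0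
            then (if trM m (μ * (u + u⁻¹) ^ 2) = 0 then (2:ℤ) else 0) else 0 := by
      intro u _
      by_cases h1 : 1 + (a * u + a ^ (2:ℕ) ^ m * u⁻¹) = 0 <;>
        by_cases h2 : trM m (μ * (u + u⁻¹) ^ 2) = 0 <;>
        simp [h1, h2, eps]
    rw [Finset.sum_congr rfl e1, ← Finset.sum_filter, ← Finset.sum_filter,
      Finset.filter_filter, Finset.sum_const, hAdef]
    rw [nsmul_eq_mul]
    ring
  have hsum2 : ∑ u ∈ U, (if 1 + (u + u⁻¹) + (a * u + a ^ (2:ℕ) ^ m * u⁻¹) = 0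
        then (1:ℤ) else 0) * (1 - eps (trM m (μ * (u + u⁻¹) ^ 2))) = 2 * (B:ℤ) := by
    have e1 : ∀ u ∈ U, (if 1 + (u + u⁻¹) + (a * u + a ^ (2:ℕ) ^ m * u⁻¹) = 0
          then (1:ℤ) else 0) * (1 - eps (trM m (μ * (u + u⁻¹) ^ 2)))
        = if 1 + (u + u⁻¹) + (a * u + a ^ (2:ℕ) ^ m * u⁻¹) = 0
            then (if ¬ trM m (μ * (u + u⁻¹) ^ 2) = 0 then (2:ℤ) else 0) else 0 := by
      intro u _
      by_cases h1 : 1 + (u + u⁻¹) + (a * u + a ^ (2:ℕ) ^ m * u⁻¹) = 0 <;>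
        by_cases h2 : trM m (μ * (u + u⁻¹) ^ 2) = 0 <;>
        simp [h1, h2, eps]
    rw [Finset.sum_congr rfl e1, ← Finset.sum_filter, ← Finset.sum_filter,
      Finset.filter_filter, Finset.sum_const, hBdef]
    rw [nsmul_eq_mul]
    ring
  -- step E : the cardinality bounds
  have hA2 : A ≤ 2 := by
    rw [hAdef]
    refine le_trans (Finset.card_le_card ?_) (Dcard m a)
    intro x hx
    obtain ⟨hxU, hxc, -⟩ := Finset.mem_filter.mp hx
    refine Finset.mem_filter.mpr ⟨hxU, ?_⟩
    exact (char2_eq_of_add_eq_zero _ _ hxc).symm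
  have hB2 : B ≤ 2 := by
    rw [hBdef]
    refine le_trans (Finset.card_le_card ?_) (Dcard m (a + 1))
    intro x hx
    obtain ⟨hxU, hxc, -⟩ := Finset.mem_filter.mp hx
    refine Finset.mem_filter.mpr ⟨hxU, ?_⟩
    have hq : (a + 1) ^ (2:ℕ) ^ m = a ^ (2:ℕ) ^ m + 1 := by
      rw [add_pow_char_pow a 1 2 m, one_pow]
    rw [hq]
    linear_combination hxc - h2F
  -- step F : conclude
  have hfinal : 2 * walsh m (fFun m l μ) a = 2 * ((2:ℤ) ^ m * ((A:ℤ) + (B:ℤ) - 1)) := by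
    rw [hmain, hstep, Finset.sum_add_distrib, hsum1, hsum2]
    ring
  have hW : walsh m (fFun m l μ) a = (2:ℤ) ^ m * ((A:ℤ) + (B:ℤ) - 1) :=
    mul_left_cancel₀ two_ne_zero hfinal
  rw [hW]
  clear_value A B
  interval_cases A <;> interval_cases B <;>
    simp only [Set.mem_insert_iff, Set.mem_singleton_iff] <;> push_cast
  · exact Or.inr (Or.inr (Or.inl (by ring)))
  · exact Or.inl (by ring)
  · exact Or.inr (Or.inl (by ring))
  · exact Or.inl (by ring)
  · exact Or.inr (Or.inl (by ring))
  · exact Or.inr (Or.inr (Or.inr (Or.inl (by rw [pow_succ]; try ring))))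
  · exact Or.inr (Or.inl (by ring))
  · exact Or.inr (Or.inr (Or.inr (Or.inl (by rw [pow_succ]; try ring))))
  · exact Or.inr (Or.inr (Or.inr (Or.inr (by ring))))
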